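/- arXiv:1711.06641 — 7 statements merged into one kernel-verified Lean document; each statement's English description precedes it below -/
import Mathlib

section
/- The set S₀ = {c ∈ C : 2·s(c) > n} of candidates approved by a strict majority of the voters is a NAV-winning committee, and every NAV-winning committee contains S₀; consequently S₀ is the unique smallest winning committee under the NAV rule. -/
/-!
The NAV score is modular: a voter contributes `+1` for each member of the committee it approves
and `-1` for each other member, so exchanging the two sums gives
`score S = ∑ c ∈ S, (2 s(c) - n)`. A sum of fixed weights over `S` is maximised by the set of
positive weights, and a maximiser missing a positive weight could be improved by adding it. The
candidates of positive weight are exactly the majority-approved ones.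
-/

open Finset

section PositiveSupport

variable {α M : Type*} [Fintype α] [AddCommGroup M] [LinearOrder M] [IsOrderedAddMonoid M]

theorem sum_le_sum_filter_pos (w : α → M) (T : Finset α) :
    ∑ c ∈ T, w c ≤ ∑ c ∈ univ.filter (0 < w ·), w c := by
  classical
  calc ∑ c ∈ T, w c ≤ ∑ c ∈ T, if 0 < w c then w c else 0 :=
        sum_le_sum fun c _ ↦ by split_ifs <;> simp_all
    _ ≤ ∑ c, if 0 < w c then w c else 0 :=
        sum_le_sum_of_subset_of_nonneg T.subset_univ fun c _ _ ↦ by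
          split_ifs with h
          exacts [h.le, le_rfl]
    _ = ∑ c ∈ univ.filter (0 < w ·), w c := (sum_filter _ _).symm

theorem filter_pos_subset_of_forall_sum_le (w : α → M) {S : Finset α}
    (hS : ∀ T : Finset α, ∑ c ∈ T, w c ≤ ∑ c ∈ S, w c) :
    univ.filter (0 < w ·) ⊆ S := by
  classical
  intro c hc
  by_contra hcS
  have h := hS (insert c S)
  rw [sum_insert hcS] at h
  exact (mem_filter.mp hc).2.not_ge (by simpa using h)

end PositiveSupport

section NAV

variable {ι C : Type*} [Fintype ι] [DecidableEq C]

def navScore [Fintype C] (v : ι → Finset C) (S : Finset C) : ℤ :=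
  ∑ i, ((#(S ∩ v i) : ℤ) - #(S ∩ (v i)ᶜ))

def netApproval (v : ι → Finset C) (c : C) : ℤ :=
  ∑ i, if c ∈ v i then 1 else -1

theorem card_inter_sub_card_inter_compl [Fintype C] (S t : Finset C) :
    (#(S ∩ t) : ℤ) - #(S ∩ tᶜ) = ∑ c ∈ S, if c ∈ t then 1 else -1 := by
  rw [← filter_mem_eq_inter, ← filter_mem_eq_inter, natCast_card_filter, natCast_card_filter,
    ← sum_sub_distrib]
  refine sum_congr rfl fun c _ ↦ ?_
  split_ifs <;> simp_all

theorem navScore_eq_sum_netApproval [Fintype C] (v : ι → Finset C) (S : Finset C) :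
    navScore v S = ∑ c ∈ S, netApproval v c := by
  simp only [navScore, netApproval, card_inter_sub_card_inter_compl]
  exact sum_comm

theorem netApproval_pos_iff (v : ι → Finset C) (c : C) :
    0 < netApproval v c ↔ Fintype.card ι < 2 * #{i | c ∈ v i} := by
  have h : netApproval v c = 2 * (#{i | c ∈ v i} : ℤ) - Fintype.card ι := by
    rw [netApproval, natCast_card_filter, ← card_univ, cast_card, mul_sum, ← sum_sub_distrib]
    refine sum_congr rfl fun i _ ↦ ?_
    split_ifs <;> norm_num
  rw [h]
  omega

end NAV

/-- The set `S₀` of candidates approved by a strict majority of the voters is a NAV-winning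
committee, every NAV-winning committee contains it, and hence it is the unique smallest
NAV-winning committee. -/
theorem nav_smallest_winning {C : Type*} [Fintype C] [DecidableEq C]
    (n : ℕ) (v : Fin n → Finset C)
    (S₀ : Finset C)
    (hS₀ : S₀ = Finset.univ.filter
      (fun c : C => n < 2 * (Finset.univ.filter (fun i : Fin n => c ∈ v i)).card)) :
    (∀ T : Finset C,
        (∑ i : Fin n, (((T ∩ v i).card : ℤ) - ((T ∩ (v i)ᶜ).card : ℤ)))
          ≤ (∑ i : Fin n, (((S₀ ∩ v i).card : ℤ) - ((S₀ ∩ (v i)ᶜ).card : ℤ))))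
    ∧ (∀ S : Finset C,
        (∀ T : Finset C,
          (∑ i : Fin n, (((T ∩ v i).card : ℤ) - ((T ∩ (v i)ᶜ).card : ℤ)))
            ≤ (∑ i : Fin n, (((S ∩ v i).card : ℤ) - ((S ∩ (v i)ᶜ).card : ℤ)))) →
        S₀ ⊆ S)
    ∧ (∀ S : Finset C,
        (∀ T : Finset C,
          (∑ i : Fin n, (((T ∩ v i).card : ℤ) - ((T ∩ (v i)ᶜ).card : ℤ)))
            ≤ (∑ i : Fin n, (((S ∩ v i).card : ℤ) - ((S ∩ (v i)ᶜ).card : ℤ)))) →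
        S ≠ S₀ → S₀.card < S.card) := by
  have hscore : ∀ S : Finset C,
      ∑ i : Fin n, (((S ∩ v i).card : ℤ) - ((S ∩ (v i)ᶜ).card : ℤ)) =
        ∑ c ∈ S, netApproval v c :=
    navScore_eq_sum_netApproval v
  have hS₀' : S₀ = univ.filter (0 < netApproval v ·) := by
    simp only [hS₀, netApproval_pos_iff, Fintype.card_fin]
  simp only [hscore]
  have hsub : ∀ S : Finset C, (∀ T : Finset C, ∑ c ∈ T, netApproval v c ≤
      ∑ c ∈ S, netApproval v c) → S₀ ⊆ S :=
    fun S hS ↦ hS₀' ▸ filter_pos_subset_of_forall_sum_le _ hS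
  refine ⟨hS₀' ▸ sum_le_sum_filter_pos _, hsub, fun S hS hne ↦ ?_⟩
  exact card_lt_card ((hsub S hS).ssubset_of_ne (Ne.symm hne))
end

section
/- Let t₁ : ℕ → ℕ be given by t₁(0) = 0 and t₁(x) = 1 for x ≥ 1. The (0,t₁)-NAV score of a committee S ⊆ C equals −|{i : S ∩ v̄_i ≠ ∅}| and is therefore at most 0; a committee S attains the maximum score 0 if and only if S ⊆ ⋂_{i=1}^{n} v_i, i.e., every member of S is approved by all voters. Consequently the unanimity committee ⋂_{i=1}^{n} v_i is a winning committee under the (0,t₁)-NAV rule and contains every winning committee, so it is the unique largest winning committee (the output of the Unanimity rule UV). -/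
/-! Voter `i` costs `S` exactly one point iff `S ⊄ vᵢ`, so the score is `-#{i | S ⊄ vᵢ}`: it is
at most `0`, with equality iff `S` lies in every `vᵢ`. The unanimity committee `⋂ᵢ vᵢ` scores
`0`, hence wins, and every winner must then score `0` as well. -/

open Finset

/-- The threshold function `t₁`: `t₁ 0 = 0` and `t₁ x = 1` for `x ≥ 1`. -/
def t1 : ℕ → ℕ := fun x => if x = 0 then 0 else 1

lemma t1_card_eq_ite {α : Type*} (s : Finset α) : t1 s.card = if s.Nonempty then 1 else 0 := by
  by_cases hs : s.Nonempty
  · simp [t1, hs, hs.card_pos.ne']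
  · simp [t1, not_nonempty_iff_eq_empty.mp hs]

section ZeroT1Score

variable {C ι : Type*} [Fintype C] [DecidableEq C] [Fintype ι]

def zeroT1Score (v : ι → Finset C) (S : Finset C) : ℤ :=
  ∑ i, ((0 : ℤ) - (t1 ((S ∩ (v i)ᶜ).card) : ℤ))

variable (v : ι → Finset C)

lemma zeroT1Score_eq_neg_card (S : Finset C) :
    zeroT1Score v S = -(#{i | (S ∩ (v i)ᶜ).Nonempty} : ℤ) := by
  simp only [zeroT1Score, zero_sub, sum_neg_distrib, card_filter, t1_card_eq_ite,
    Nat.cast_sum, Nat.cast_ite, Nat.cast_one, Nat.cast_zero]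

lemma zeroT1Score_nonpos (S : Finset C) : zeroT1Score v S ≤ 0 := by
  rw [zeroT1Score_eq_neg_card]
  exact neg_nonpos.mpr (Nat.cast_nonneg _)

lemma zeroT1Score_eq_zero_iff (S : Finset C) : zeroT1Score v S = 0 ↔ S ⊆ univ.inf v := by
  rw [zeroT1Score_eq_neg_card, neg_eq_zero, Nat.cast_eq_zero, card_eq_zero,
    filter_eq_empty_iff, Finset.le_inf_iff]
  simp only [← sdiff_eq_inter_compl, sdiff_nonempty, not_not, mem_univ, forall_const]

lemma zeroT1Score_univ_inf : zeroT1Score v (univ.inf v) = 0 :=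
  (zeroT1Score_eq_zero_iff v _).mpr Subset.rfl

lemma zeroT1Score_le_zeroT1Score_univ_inf (T : Finset C) :
    zeroT1Score v T ≤ zeroT1Score v (univ.inf v) :=
  (zeroT1Score_univ_inf v).symm ▸ zeroT1Score_nonpos v T

lemma subset_univ_inf_of_forall_zeroT1Score_le {S : Finset C}
    (hS : ∀ T, zeroT1Score v T ≤ zeroT1Score v S) : S ⊆ univ.inf v :=
  (zeroT1Score_eq_zero_iff v S).mp <| (zeroT1Score_nonpos v S).antisymm <|
    (zeroT1Score_univ_inf v).symm.trans_le (hS _)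

end ZeroT1Score

/-- The `(0,t₁)`-NAV score of `S` equals `−|{i : S ∩ v̄ᵢ ≠ ∅}|`, is at most `0`, is `0` iff
`S ⊆ ⋂ᵢ vᵢ`; hence the unanimity committee `⋂ᵢ vᵢ` is a winning committee and contains every
winning committee. -/
theorem zero_t1_nav_unanimity {C : Type*} [Fintype C] [DecidableEq C]
    (n : ℕ) (v : Fin n → Finset C) :
    (∀ S : Finset C,
        (∑ i : Fin n, ((0 : ℤ) - (t1 ((S ∩ (v i)ᶜ).card) : ℤ)))
          = -((Finset.univ.filter (fun i : Fin n => (S ∩ (v i)ᶜ).Nonempty)).card : ℤ))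
    ∧ (∀ S : Finset C,
        (∑ i : Fin n, ((0 : ℤ) - (t1 ((S ∩ (v i)ᶜ).card) : ℤ))) ≤ 0)
    ∧ (∀ S : Finset C,
        (∑ i : Fin n, ((0 : ℤ) - (t1 ((S ∩ (v i)ᶜ).card) : ℤ))) = 0
          ↔ S ⊆ Finset.univ.inf v)
    ∧ (∀ T : Finset C,
        (∑ i : Fin n, ((0 : ℤ) - (t1 ((T ∩ (v i)ᶜ).card) : ℤ)))
          ≤ (∑ i : Fin n, ((0 : ℤ) - (t1 (((Finset.univ.inf v) ∩ (v i)ᶜ).card) : ℤ))))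
    ∧ (∀ S : Finset C,
        (∀ T : Finset C,
          (∑ i : Fin n, ((0 : ℤ) - (t1 ((T ∩ (v i)ᶜ).card) : ℤ)))
            ≤ (∑ i : Fin n, ((0 : ℤ) - (t1 ((S ∩ (v i)ᶜ).card) : ℤ)))) →
        S ⊆ Finset.univ.inf v) :=
  ⟨zeroT1Score_eq_neg_card v, zeroT1Score_nonpos v, zeroT1Score_eq_zero_iff v,
    zeroT1Score_le_zeroT1Score_univ_inf v, fun _ => subset_univ_inf_of_forall_zeroT1Score_le v⟩
end

section
/- Assume C is nonempty and let M = max_{c ∈ C} s(c) be the largest approval score. Then for every nonempty committee S ⊆ C the number of voters v_i with S ⊆ v_i is at most M, and a nonempty committee S satisfies |{i : S ⊆ v_i}| = M if and only if every candidate in S has approval score M and all candidates in S are approved by exactly the same set of voters. Hence the winning committees under the t_full-Threshold rule (among nonempty committees) are exactly those committees all of whose members have the highest approval score and are approved by the same group of voters. -/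
open Finset

/-!
The voters approving all of a committee `S` form the intersection of the approver sets of its
members, so their number is at most the score of any member, hence at most `M`. Equality forces
that intersection to coincide with every member's approver set of size `M`; conversely, if all
members share one approver set, the intersection is that set. Since a top-scoring singleton
reaches `M`, the committees of maximal unanimous support are exactly those reaching `M`.
-/

section Unanimous

variable {ι C : Type*} [Fintype ι] [DecidableEq C] (v : ι → Finset C)

theorem filter_subset_subset_filter_mem {S : Finset C} {c : C} (hc : c ∈ S) :
    univ.filter (fun i => S ⊆ v i) ⊆ univ.filter (fun i => c ∈ v i) :=
  monotone_filter_right _ fun _ _ hS => hS hc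

theorem filter_subset_eq_filter_mem {S : Finset C} {c₀ : C} (hc₀ : c₀ ∈ S)
    (h : ∀ c ∈ S, univ.filter (fun i => c ∈ v i) = univ.filter (fun i => c₀ ∈ v i)) :
    univ.filter (fun i => S ⊆ v i) = univ.filter (fun i => c₀ ∈ v i) := by
  refine (filter_subset_subset_filter_mem v hc₀).antisymm fun i hi => ?_
  refine mem_filter.2 ⟨mem_univ i, fun c hc => ?_⟩
  have hi' : i ∈ univ.filter (fun i => c ∈ v i) := by rwa [h c hc]
  exact (mem_filter.1 hi').2

variable {M : ℕ}

theorem card_filter_subset_le {S : Finset C} (hS : S.Nonempty)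
    (hM : ∀ c ∈ S, #(univ.filter (fun i => c ∈ v i)) ≤ M) :
    #(univ.filter (fun i => S ⊆ v i)) ≤ M :=
  let ⟨c, hc⟩ := hS
  (card_le_card (filter_subset_subset_filter_mem v hc)).trans (hM c hc)

theorem card_filter_subset_eq_iff {S : Finset C} (hS : S.Nonempty)
    (hM : ∀ c ∈ S, #(univ.filter (fun i => c ∈ v i)) ≤ M) :
    #(univ.filter (fun i => S ⊆ v i)) = M ↔
      (∀ c ∈ S, #(univ.filter (fun i => c ∈ v i)) = M) ∧
        ∀ c ∈ S, ∀ c' ∈ S,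
          univ.filter (fun i => c ∈ v i) = univ.filter (fun i => c' ∈ v i) := by
  constructor
  · intro h
    have hU : ∀ c ∈ S, univ.filter (fun i => S ⊆ v i) = univ.filter (fun i => c ∈ v i) :=
      fun c hc => eq_of_subset_of_card_le (filter_subset_subset_filter_mem v hc) (h ▸ hM c hc)
    exact ⟨fun c hc => hU c hc ▸ h, fun c hc c' hc' => (hU c hc).symm.trans (hU c' hc')⟩
  · rintro ⟨hcard, hsame⟩
    obtain ⟨c₀, hc₀⟩ := hS
    rw [filter_subset_eq_filter_mem v hc₀ fun c hc => hsame c hc c₀ hc₀]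
    exact hcard c₀ hc₀

end Unanimous

/-- Let `M` be the largest approval score. Every nonempty committee is unanimously approved
(contained in the ballot) by at most `M` voters; equality holds iff every member has approval
score `M` and all members are approved by the same set of voters; hence the nonempty
`t_full`-Threshold winning committees are exactly such committees. -/
theorem t_full_threshold_winning {C : Type*} [Fintype C] [DecidableEq C] [Nonempty C]
    (n : ℕ) (v : Fin n → Finset C) (M : ℕ)
    (hM : M = Finset.univ.sup
      (fun c : C => (Finset.univ.filter (fun i : Fin n => c ∈ v i)).card)) :
    (∀ S : Finset C, S.Nonempty →
        (Finset.univ.filter (fun i : Fin n => S ⊆ v i)).card ≤ M)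
    ∧ (∀ S : Finset C, S.Nonempty →
        ((Finset.univ.filter (fun i : Fin n => S ⊆ v i)).card = M
          ↔ ((∀ c ∈ S, (Finset.univ.filter (fun i : Fin n => c ∈ v i)).card = M)
              ∧ ∀ c ∈ S, ∀ c' ∈ S,
                  (Finset.univ.filter (fun i : Fin n => c ∈ v i))
                    = (Finset.univ.filter (fun i : Fin n => c' ∈ v i)))))
    ∧ (∀ S : Finset C, S.Nonempty →
        ((∀ T : Finset C, T.Nonempty →
            (Finset.univ.filter (fun i : Fin n => T ⊆ v i)).card
              ≤ (Finset.univ.filter (fun i : Fin n => S ⊆ v i)).card)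
          ↔ ((∀ c ∈ S, (Finset.univ.filter (fun i : Fin n => c ∈ v i)).card = M)
              ∧ ∀ c ∈ S, ∀ c' ∈ S,
                  (Finset.univ.filter (fun i : Fin n => c ∈ v i))
                    = (Finset.univ.filter (fun i : Fin n => c' ∈ v i))))) := by
  have hle (c : C) : #(univ.filter (fun i => c ∈ v i)) ≤ M :=
    hM ▸ le_sup (f := fun c => #(univ.filter (fun i => c ∈ v i))) (mem_univ c)
  have hbound (S : Finset C) (hS : S.Nonempty) :=
    card_filter_subset_le v hS fun c _ => hle c
  have hiff (S : Finset C) (hS : S.Nonempty) :=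
    card_filter_subset_eq_iff v hS fun c _ => hle c
  obtain ⟨c, -, hc⟩ := exists_mem_eq_sup univ univ_nonempty
    fun c => #(univ.filter (fun i => c ∈ v i))
  have hsingleton : #(univ.filter (fun i => {c} ⊆ v i)) = M := by
    simp only [singleton_subset_iff, hM, hc]
  refine ⟨hbound, hiff, fun S hS => Iff.trans ⟨fun h => ?_, fun h T hT => ?_⟩ (hiff S hS)⟩
  · exact (hbound S hS).antisymm (hsingleton ▸ h {c} (singleton_nonempty c))
  · exact h ▸ hbound T hT
end

section
/- Let U = {u_1, …, u_n} be a finite set, let 𝒮 = {S_1, …, S_m} be a family of subsets of U, and let k be a positive integer with m > k. Form an election with candidate set C = F ∪ 𝒮, where F = {f_1, …, f_k} is a set of k filler candidates, and with the following k·n + 2 voters: one balancing voter approving exactly F; one balancing voter approving exactly 𝒮; and, for each element u_i ∈ U and each j ∈ {1, …, k}, a voter approving exactly (F \ {f_j}) ∪ {S_ℓ ∈ 𝒮 : u_i ∈ S_ℓ}. Then there exists a nonempty committee S ⊆ C such that every voter v in this election satisfies 2·|S ∩ v| ≥ |S| if and only if there exist at most k sets in 𝒮 whose union is U. -/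
/-!
Split a committee `W` into its filler part `J` and its set part `I`. The two balancing voters
force `#J = #I`, so `W` is nonempty only if `J` is. A voter `(u, j)` with `f_j ∈ J` then sees only
`#J - 1` of the fillers in `W`, so it is satisfied exactly when `I` contains a set covering `u`:
hence `I` is a cover with `#I = #J ≤ k`. Conversely, a cover can be padded to exactly `k` sets
(as `k < m`), and together with all `k` fillers it forms a committee satisfying every voter.
-/

open Finset

/-- Ballot of the first balancing voter: all filler candidates. -/
def fillerBallot (k m : ℕ) : Finset (Fin k ⊕ Fin m) :=
  Finset.univ.image Sum.inl

/-- Ballot of the second balancing voter: all set candidates. -/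
def setBallot (k m : ℕ) : Finset (Fin k ⊕ Fin m) :=
  Finset.univ.image Sum.inr

/-- Ballot of the voter associated with element `i` and index `j`: all filler candidates except
`f_j`, together with the set candidates whose sets contain `i`. -/
def elementBallot {n m k : ℕ} (𝒮 : Fin m → Finset (Fin n)) (i : Fin n) (j : Fin k) :
    Finset (Fin k ⊕ Fin m) :=
  ((Finset.univ.filter (fun j' : Fin k => j' ≠ j)).image Sum.inl)
    ∪ ((Finset.univ.filter (fun ℓ : Fin m => i ∈ 𝒮 ℓ)).image Sum.inr)

lemma Finset.card_inter_disjSum {α β : Type*} [DecidableEq α] [DecidableEq β]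
    (u : Finset (α ⊕ β)) (s : Finset α) (t : Finset β) :
    #(u ∩ s.disjSum t) = #(u.toLeft ∩ s) + #(u.toRight ∩ t) := by
  rw [← card_toLeft_add_card_toRight, toLeft_inter, toRight_inter, toLeft_disjSum,
    toRight_disjSum]

section Reduction

variable {n m k : ℕ}

lemma fillerBallot_eq_disjSum : fillerBallot k m = univ.disjSum ∅ := by
  ext (a | b) <;> simp [fillerBallot]

lemma setBallot_eq_disjSum : setBallot k m = (∅ : Finset (Fin k)).disjSum univ := by
  ext (a | b) <;> simp [setBallot]

lemma elementBallot_eq_disjSum (𝒮 : Fin m → Finset (Fin n)) (i : Fin n) (j : Fin k) :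
    elementBallot 𝒮 i j = (univ.erase j).disjSum {ℓ | i ∈ 𝒮 ℓ} := by
  ext (a | b) <;> simp [elementBallot]

lemma card_inter_fillerBallot (W : Finset (Fin k ⊕ Fin m)) :
    #(W ∩ fillerBallot k m) = #W.toLeft := by
  rw [fillerBallot_eq_disjSum, card_inter_disjSum, inter_univ, inter_empty, card_empty, add_zero]

lemma card_inter_setBallot (W : Finset (Fin k ⊕ Fin m)) :
    #(W ∩ setBallot k m) = #W.toRight := by
  rw [setBallot_eq_disjSum, card_inter_disjSum, inter_univ, inter_empty, card_empty, zero_add]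

lemma card_inter_elementBallot (𝒮 : Fin m → Finset (Fin n)) (W : Finset (Fin k ⊕ Fin m))
    (i : Fin n) (j : Fin k) :
    #(W ∩ elementBallot 𝒮 i j) = #(W.toLeft.erase j) + #{ℓ ∈ W.toRight | i ∈ 𝒮 ℓ} := by
  rw [elementBallot_eq_disjSum, card_inter_disjSum, inter_erase, inter_univ, inter_filter,
    inter_univ]

def AllVotersSatisfied (𝒮 : Fin m → Finset (Fin n)) (W : Finset (Fin k ⊕ Fin m)) : Prop :=
  #W ≤ 2 * #(W ∩ fillerBallot k m) ∧ #W ≤ 2 * #(W ∩ setBallot k m)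
    ∧ ∀ (i : Fin n) (j : Fin k), #W ≤ 2 * #(W ∩ elementBallot 𝒮 i j)

lemma allVotersSatisfied_iff (𝒮 : Fin m → Finset (Fin n)) (W : Finset (Fin k ⊕ Fin m)) :
    AllVotersSatisfied 𝒮 W ↔ #W.toLeft = #W.toRight ∧
      ∀ (i : Fin n) (j : Fin k), #W.toLeft ≤ #(W.toLeft.erase j) + #{ℓ ∈ W.toRight | i ∈ 𝒮 ℓ} := by
  simp only [AllVotersSatisfied, card_inter_fillerBallot, card_inter_setBallot,
    card_inter_elementBallot]
  have hcard := card_toLeft_add_card_toRight (u := W)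
  constructor
  · rintro ⟨hfiller, hset, helement⟩
    exact ⟨by omega, fun i j => by have := helement i j; omega⟩
  · rintro ⟨hbalanced, helement⟩
    exact ⟨by omega, by omega, fun i j => by have := helement i j; omega⟩

lemma AllVotersSatisfied.exists_cover {𝒮 : Fin m → Finset (Fin n)} {W : Finset (Fin k ⊕ Fin m)}
    (hW : AllVotersSatisfied 𝒮 W) (hne : W.Nonempty) :
    #W.toRight ≤ k ∧ ∀ u : Fin n, ∃ ℓ ∈ W.toRight, u ∈ 𝒮 ℓ := by
  obtain ⟨hbalanced, helement⟩ := (allVotersSatisfied_iff 𝒮 W).mp hW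
  obtain ⟨j, hj⟩ : W.toLeft.Nonempty := by
    rw [← card_pos]
    have := hne.card_pos
    rw [← card_toLeft_add_card_toRight] at this
    omega
  have hJk : #W.toLeft ≤ k := by simpa using card_le_univ W.toLeft
  refine ⟨hbalanced ▸ hJk, fun u => ?_⟩
  have hcount := helement u j
  rw [card_erase_of_mem hj] at hcount
  have hJpos : 0 < #W.toLeft := card_pos.mpr ⟨j, hj⟩
  obtain ⟨ℓ, hℓ⟩ : {ℓ ∈ W.toRight | u ∈ 𝒮 ℓ}.Nonempty := by rw [← card_pos]; omega
  exact ⟨ℓ, mem_filter.mp hℓ⟩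

lemma allVotersSatisfied_univ_disjSum {𝒮 : Fin m → Finset (Fin n)} {I : Finset (Fin m)}
    (hI : #I = k) (hcover : ∀ u : Fin n, ∃ ℓ ∈ I, u ∈ 𝒮 ℓ) :
    AllVotersSatisfied 𝒮 ((univ : Finset (Fin k)).disjSum I) := by
  rw [allVotersSatisfied_iff, toLeft_disjSum, toRight_disjSum, card_univ, Fintype.card_fin]
  refine ⟨hI.symm, fun u j => ?_⟩
  obtain ⟨ℓ, hℓI, huℓ⟩ := hcover u
  have : 0 < #{ℓ ∈ I | u ∈ 𝒮 ℓ} := card_pos.mpr ⟨ℓ, mem_filter.mpr ⟨hℓI, huℓ⟩⟩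
  rw [card_erase_of_mem (mem_univ j), card_univ, Fintype.card_fin]
  omega

end Reduction

/-- In the reduced election there is a nonempty committee approved by every voter under the
majority threshold iff there are at most `k` sets in `𝒮` whose union is `U`. -/
theorem t_maj_all_satisfied_iff_set_cover
    (n m k : ℕ) (hk : 0 < k) (hmk : k < m) (𝒮 : Fin m → Finset (Fin n)) :
    (∃ W : Finset (Fin k ⊕ Fin m), W.Nonempty
        ∧ W.card ≤ 2 * (W ∩ fillerBallot k m).card
        ∧ W.card ≤ 2 * (W ∩ setBallot k m).card
        ∧ (∀ (i : Fin n) (j : Fin k), W.card ≤ 2 * (W ∩ elementBallot 𝒮 i j).card))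
      ↔ (∃ I : Finset (Fin m), I.card ≤ k ∧ ∀ u : Fin n, ∃ ℓ ∈ I, u ∈ 𝒮 ℓ) := by
  constructor
  · rintro ⟨W, hne, hW⟩
    exact ⟨W.toRight, AllVotersSatisfied.exists_cover hW hne⟩
  · rintro ⟨I, hIk, hcover⟩
    obtain ⟨I', hII', hI'k⟩ := exists_superset_card_eq hIk (by simpa using hmk.le)
    refine ⟨univ.disjSum I', ⟨.inl ⟨0, hk⟩, by simp⟩, allVotersSatisfied_univ_disjSum hI'k ?_⟩
    exact fun u => (hcover u).imp fun ℓ ⟨hℓI, huℓ⟩ => ⟨hII' hℓI, huℓ⟩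
end

section
/- Consider an X3C instance with n > 39 and its reduced election. Then there exists a committee C ⊆ {S_1, …, S_n} whose (f,g)-NAV score is at least 7n if and only if the X3C instance admits an exact cover, i.e., a subfamily C' ⊆ {S_1, …, S_n} such that every element b_i belongs to exactly one member of C'. -/
open Finset

/-- `f(0) = 0` and `f(x) = 4` for `x ≥ 1`. -/
def fX : ℕ → ℤ := fun x => if x = 0 then 0 else 4

/-- `g(0) = 0`, `g(1) = 1` and `g(x) = 2` for `x ≥ 2`. -/
def gX : ℕ → ℤ := fun x => if x = 0 then 0 else if x = 1 then 1 else 2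

/-- Ballot of voter `(i, t)` in the reduced election: for `t ≠ 2` (the two set voters of
element `i`) the candidates `j` with `i ∈ SS j`, and for `t = 2` (the antiset voter of
element `i`) the candidates `j` with `i ∉ SS j`. -/
def x3cBallot {n : ℕ} (SS : Fin n → Finset (Fin n)) (p : Fin n × Fin 3) : Finset (Fin n) :=
  if p.2 = 2 then Finset.univ.filter (fun j => p.1 ∉ SS j)
  else Finset.univ.filter (fun j => p.1 ∈ SS j)

/-- The `(f,g)`-NAV score of a committee `T` in the reduced election. -/
def x3cScore {n : ℕ} (SS : Fin n → Finset (Fin n)) (T : Finset (Fin n)) : ℤ :=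
  ∑ p : Fin n × Fin 3,
    (fX ((T ∩ x3cBallot SS p).card) - gX ((T ∩ (x3cBallot SS p)ᶜ).card))

/-!
If element `i` is covered `k` times by a committee of size `m`, its three voters contribute
`2 (f k - g (m - k)) + f (m - k) - g k` to the score. This is at most `2 + 10 k`, and when
`k + 2 ≤ m` it equals `7` for `k = 1` and is at most `6` otherwise. As the coverage counts sum
to `3 m`, a committee of size at most `4` scores at most `2 n + 120 < 7 n`; a larger one has
all counts `≤ 3 ≤ m - 2`, so it scores `7 n` exactly when every count is `1`. An exact cover has `n / 3 ≥ 14` members.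
-/

def coverCount {α β : Type*} [DecidableEq α] (S : β → Finset α) (T : Finset β) (a : α) : ℕ :=
  (T.filter fun b => a ∈ S b).card

lemma sum_coverCount {α β : Type*} [Fintype α] [DecidableEq α] (S : β → Finset α)
    (T : Finset β) : ∑ a, coverCount S T a = ∑ b ∈ T, (S b).card := by
  simpa [coverCount, bipartiteAbove, bipartiteBelow] using
    sum_card_bipartiteAbove_eq_sum_card_bipartiteBelow (s := univ) (t := T) (fun a b => a ∈ S b)

lemma coverCount_le {α β : Type*} [Fintype β] [DecidableEq α] (S : β → Finset α)
    (T : Finset β) (a : α) : coverCount S T a ≤ (univ.filter fun b => a ∈ S b).card :=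
  card_le_card (filter_subset_filter _ (subset_univ T))

lemma card_filter_notMem {α β : Type*} [DecidableEq α] (S : β → Finset α) (T : Finset β)
    (a : α) : (T.filter fun b => a ∉ S b).card = T.card - coverCount S T a := by
  rw [coverCount, ← card_filter_add_card_filter_not (s := T) (fun b => a ∈ S b)]
  omega

/-- The score of the three voters of an element covered `k` times by a committee of size
`m ≥ k`. -/
def elementScore (k m : ℕ) : ℤ := 2 * (fX k - gX (m - k)) + (fX (m - k) - gX k)

lemma elementScore_le (k m : ℕ) : elementScore k m ≤ 2 + 10 * k := by
  unfold elementScore fX gX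
  split_ifs <;> omega

lemma elementScore_one {m : ℕ} (hm : 3 ≤ m) : elementScore 1 m = 7 := by
  simp [elementScore, fX, gX, show m - 1 ≠ 0 by omega, show m - 1 ≠ 1 by omega]

lemma elementScore_le_six {k m : ℕ} (hk : k ≠ 1) (hkm : k + 2 ≤ m) : elementScore k m ≤ 6 := by
  unfold elementScore fX gX
  split_ifs <;> omega

section Score

variable {n : ℕ} (SS : Fin n → Finset (Fin n)) (T : Finset (Fin n))

lemma x3cScore_eq_sum_elementScore :
    x3cScore SS T = ∑ i, elementScore (coverCount SS T i) T.card := by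
  rw [x3cScore, Fintype.sum_prod_type]
  refine sum_congr rfl fun i _ => ?_
  simp only [x3cBallot, sum_sub_distrib, Fin.sum_univ_three, Fin.reduceEq, ↓reduceIte,
    inter_filter, inter_univ, compl_filter, Decidable.not_not, card_filter_notMem, coverCount,
    elementScore]
  ring

lemma x3cScore_le : x3cScore SS T ≤ 2 * n + 10 * ∑ i, coverCount SS T i := by
  rw [x3cScore_eq_sum_elementScore]
  calc ∑ i, elementScore (coverCount SS T i) T.card
      ≤ ∑ i, (2 + 10 * (coverCount SS T i : ℤ)) := sum_le_sum fun i _ => elementScore_le _ _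
    _ = 2 * n + 10 * ∑ i, coverCount SS T i := by
      simp [sum_add_distrib, mul_sum, mul_comm]

lemma seven_mul_le_x3cScore_iff (hT : ∀ i, coverCount SS T i + 2 ≤ T.card) :
    7 * n ≤ x3cScore SS T ↔ ∀ i, coverCount SS T i = 1 := by
  have hle : ∀ i ∈ univ, elementScore (coverCount SS T i) T.card ≤ 7 := fun i _ => by
    by_cases hk : coverCount SS T i = 1
    · rw [hk, elementScore_one (by simpa [hk] using hT i)]
    · linarith [elementScore_le_six hk (hT i)]
  have hsum : ∑ _i : Fin n, (7 : ℤ) = 7 * n := by simp [mul_comm]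
  rw [x3cScore_eq_sum_elementScore, ← hsum]
  constructor
  · intro h i
    have hall := (sum_eq_sum_iff_of_le hle).1 (le_antisymm (sum_le_sum hle) h)
    by_contra hk
    linarith [hall i (mem_univ i), elementScore_le_six hk (hT i)]
  · intro h
    refine (sum_congr rfl fun i _ => ?_).ge
    rw [h i, elementScore_one (by simpa [h i] using hT i)]

end Score

/-- For an X3C instance with `n > 39`, the reduced election has a committee of `(f,g)`-NAV
score at least `7n` iff the instance admits an exact cover. -/
theorem x3c_score_iff_exact_cover (n : ℕ) (hn : 39 < n)
    (SS : Fin n → Finset (Fin n))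
    (hsize : ∀ j : Fin n, (SS j).card = 3)
    (hocc : ∀ i : Fin n, (Finset.univ.filter (fun j : Fin n => i ∈ SS j)).card = 3) :
    (∃ T : Finset (Fin n), (7 * n : ℤ) ≤ x3cScore SS T)
      ↔ (∃ T : Finset (Fin n),
          ∀ i : Fin n, (T.filter (fun j : Fin n => i ∈ SS j)).card = 1) := by
  have hcount (T : Finset (Fin n)) : ∑ i, coverCount SS T i = 3 * T.card := by
    simp [sum_coverCount, hsize, mul_comm]
  constructor
  · rintro ⟨T, hT⟩
    have hT5 : 5 ≤ T.card := by
      have := hT.trans (x3cScore_le SS T)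
      rw [hcount] at this
      omega
    refine ⟨T, (seven_mul_le_x3cScore_iff SS T fun i => ?_).1 hT⟩
    have := (coverCount_le SS T i).trans_eq (hocc i)
    omega
  · rintro ⟨T, hT⟩
    have hcover : ∀ i, coverCount SS T i = 1 := hT
    have hn3 : n = 3 * T.card := by simpa [hcover] using hcount T
    exact ⟨T, (seven_mul_le_x3cScore_iff SS T fun i => by rw [hcover i]; omega).2 hcover⟩
end

section
/- Consider an X3C instance and its reduced election, and let C ⊆ {S_1, …, S_n} be a committee with at least six candidates. If the element b_i belongs to exactly one member of C, then the total contribution of the three voters v_i^1, v_i^2, v_i^3 to the (f,g)-NAV score of C, namely Σ_{v ∈ {v_i^1, v_i^2, v_i^3}} (f(|C ∩ v|) − g(|C ∩ v̄|)), equals exactly 7. -/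
open Finset

/-- The total contribution of the three voters of element `i` to the `(f,g)`-NAV score of a
committee `T`. -/
def x3cContrib {n : ℕ} (SS : Fin n → Finset (Fin n)) (T : Finset (Fin n)) (i : Fin n) : ℤ :=
  ∑ t : Fin 3,
    (fX ((T ∩ x3cBallot SS (i, t)).card) - gX ((T ∩ (x3cBallot SS (i, t))ᶜ).card))

lemma fX_of_ne_zero {x : ℕ} (hx : x ≠ 0) : fX x = 4 := if_neg hx

lemma gX_one : gX 1 = 1 := rfl

lemma gX_of_two_le {x : ℕ} (hx : 2 ≤ x) : gX x = 2 := by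
  simp only [gX]
  rw [if_neg (by omega), if_neg (by omega)]

lemma x3cContrib_eq_card_filter {n : ℕ} (SS : Fin n → Finset (Fin n)) (T : Finset (Fin n)) (i : Fin n) :
    x3cContrib SS T i =
      2 * (fX (T.filter (i ∈ SS ·)).card - gX (T.filter (i ∉ SS ·)).card) +
        (fX (T.filter (i ∉ SS ·)).card - gX (T.filter (i ∈ SS ·)).card) := by
  simp only [x3cContrib, x3cBallot, Fin.sum_univ_three, Fin.reduceEq, if_false, if_true,
    compl_filter, inter_filter, inter_univ, not_not]
  ring

theorem x3c_contrib_covered_once_general (n : ℕ)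
    (SS : Fin n → Finset (Fin n))
    (T : Finset (Fin n)) (hT : 6 ≤ T.card)
    (i : Fin n) (hi : (T.filter (fun j : Fin n => i ∈ SS j)).card = 1) :
    x3cContrib SS T i = 7 := by
  have hrest : (T.filter (fun j => i ∉ SS j)).card = T.card - 1 := by
    have := card_filter_add_card_filter_not (s := T) (p := fun j => i ∈ SS j)
    omega
  rw [x3cContrib_eq_card_filter, hi, hrest, fX_of_ne_zero one_ne_zero, fX_of_ne_zero (by omega), gX_one,
    gX_of_two_le (by omega)]
  norm_num

/-- If a committee `T` has at least six candidates and element `b_i` is covered by exactly one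
member of `T`, then the three voters of `b_i` contribute exactly `7` to its `(f,g)`-NAV
score. -/
theorem x3c_contrib_covered_once (n : ℕ)
    (SS : Fin n → Finset (Fin n))
    (hsize : ∀ j : Fin n, (SS j).card = 3)
    (hocc : ∀ i : Fin n, (Finset.univ.filter (fun j : Fin n => i ∈ SS j)).card = 3)
    (T : Finset (Fin n)) (hT : 6 ≤ T.card)
    (i : Fin n) (hi : (T.filter (fun j : Fin n => i ∈ SS j)).card = 1) :
    x3cContrib SS T i = 7 :=
  x3c_contrib_covered_once_general n SS T hT i hi
end

section
/- Consider an X3C instance and its reduced election, and let C ⊆ {S_1, …, S_n} be a nonempty committee with at least two candidates. If the element b_i belongs to no member of C, then the total contribution of the three voters v_i^1, v_i^2, v_i^3 to the (f,g)-NAV score of C, namely Σ_{v ∈ {v_i^1, v_i^2, v_i^3}} (f(|C ∩ v|) − g(|C ∩ v̄|)), is at most 0. -/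
open Finset

/-!
When no member of `T` contains `b_i`, both set voters approve nothing in `T` and pay
`g(|T|) = 2` each, while the antiset voter approves all of `T` and gains `f(|T|) = 4`,
so the three voters contribute `4 - 2 * 2 = 0`.
-/

lemma fX_of_ne_zero_s19 {k : ℕ} (hk : k ≠ 0) : fX k = 4 := if_neg hk

lemma gX_of_two_le_s19 {k : ℕ} (hk : 2 ≤ k) : gX k = 2 := by
  simp only [gX, if_neg (show k ≠ 0 by omega), if_neg (show k ≠ 1 by omega)]

section Uncovered

variable {n : ℕ} {SS : Fin n → Finset (Fin n)} {T : Finset (Fin n)} {i : Fin n}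

lemma inter_x3cBallot_of_uncovered (h : ∀ j ∈ T, i ∉ SS j) (t : Fin 3) :
    T ∩ x3cBallot SS (i, t) = if t = 2 then T else ∅ := by
  ext j
  by_cases ht : t = 2 <;> by_cases hj : j ∈ T <;> simp [x3cBallot, ht, hj, h j]

lemma inter_compl_x3cBallot_of_uncovered (h : ∀ j ∈ T, i ∉ SS j) (t : Fin 3) :
    T ∩ (x3cBallot SS (i, t))ᶜ = if t = 2 then ∅ else T := by
  ext j
  by_cases ht : t = 2 <;> by_cases hj : j ∈ T <;> simp [x3cBallot, ht, hj, h j]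

theorem x3cContrib_of_uncovered (h : ∀ j ∈ T, i ∉ SS j) :
    x3cContrib SS T i = fX #T - 2 * gX #T := by
  simp only [x3cContrib, inter_x3cBallot_of_uncovered h, inter_compl_x3cBallot_of_uncovered h,
    Fin.sum_univ_three, Fin.isValue, Fin.reduceEq, ↓reduceIte, card_empty,
    show fX 0 = 0 from rfl, show gX 0 = 0 from rfl]
  ring

end Uncovered

theorem x3c_contrib_uncovered_general (n : ℕ)
    (SS : Fin n → Finset (Fin n))
    (T : Finset (Fin n)) (hT2 : 2 ≤ T.card)
    (i : Fin n) (hi : (T.filter (fun j : Fin n => i ∈ SS j)).card = 0) :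
    x3cContrib SS T i ≤ 0 := by
  have huncovered : ∀ j ∈ T, i ∉ SS j := filter_eq_empty_iff.mp (card_eq_zero.mp hi)
  rw [x3cContrib_of_uncovered huncovered, fX_of_ne_zero_s19 (by omega), gX_of_two_le_s19 hT2]
  norm_num

/-- If a nonempty committee `T` has at least two candidates and element `b_i` is covered by no
member of `T`, then the three voters of `b_i` contribute at most `0` to its `(f,g)`-NAV
score. -/
theorem x3c_contrib_uncovered (n : ℕ)
    (SS : Fin n → Finset (Fin n))
    (hsize : ∀ j : Fin n, (SS j).card = 3)
    (hocc : ∀ i : Fin n, (Finset.univ.filter (fun j : Fin n => i ∈ SS j)).card = 3)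
    (T : Finset (Fin n)) (hT : T.Nonempty) (hT2 : 2 ≤ T.card)
    (i : Fin n) (hi : (T.filter (fun j : Fin n => i ∈ SS j)).card = 0) :
    x3cContrib SS T i ≤ 0 :=
  x3c_contrib_uncovered_general n SS T hT2 i hi
end
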